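/- For every integer k ≥ 2 and every real λ, det(λ·I_{k+2} − J_{k+2}) = λ²·E_k(λ) − λ·E_{k−1}(λ) + pq·E_{k−2}(λ), where E_j(λ) = det(λ·I_j − √(pq)·A_j) with the convention E_0(λ) = 1. -/

import Mathlib

/-
`λ • 1 - J_{k+2}` is a symmetric tridiagonal matrix, so its determinant obeys the continuant
recurrence `D_{n+2} = d_{n+1} D_{n+1} - a_n² D_n`, obtained by Laplace expansion along the last
row, and, by reversing the order of the indices, the same recurrence read from the first row.
Peeling off the last row removes the `√p` entry and gives `λ D_{k+1} - p D_k`, where `D_j` is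
a path determinant whose only defect is the `√q` entry at its head; peeling off the first row of
those gives `D_{j+2} = λ E_{j+1} - q E_j`. Collecting terms with `p + q = 1` yields the recurrence.
-/

open Filter Finset

/-- The `(n+2) × (n+2)` Jacobi matrix of the reflected random walk on the path:
zero diagonal, `J(0,1) = √q`, `J(i,i+1) = √(pq)` for `1 ≤ i ≤ n-1`, `J(n,n+1) = √p`,
and symmetric. -/
noncomputable def jacobiM (p q : ℝ) (n : ℕ) : Matrix (Fin (n + 2)) (Fin (n + 2)) ℝ :=
  fun k l =>
    if k.1 + 1 = l.1 then
      (if k.1 = 0 then Real.sqrt q else if k.1 = n then Real.sqrt p else Real.sqrt (p * q))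
    else if l.1 + 1 = k.1 then
      (if l.1 = 0 then Real.sqrt q else if l.1 = n then Real.sqrt p else Real.sqrt (p * q))
    else 0

/-- The adjacency matrix of the path graph on `j` vertices. -/
def pathAdj (j : ℕ) : Matrix (Fin j) (Fin j) ℝ :=
  fun i l => if i.1 + 1 = l.1 ∨ l.1 + 1 = i.1 then 1 else 0

/-- `E_j(λ) = det(λ·I_j - √(pq)·A_j)` (with `E_0(λ) = 1`, the determinant of the empty
matrix). -/
noncomputable def Edet (p q lam : ℝ) (j : ℕ) : ℝ :=
  (lam • (1 : Matrix (Fin j) (Fin j) ℝ) - Real.sqrt (p * q) • pathAdj j).det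

open Matrix

section

variable {R : Type*} [CommRing R]

def symmTridiag (d a : ℕ → R) (m : ℕ) : Matrix (Fin m) (Fin m) R :=
  fun i l => if i.1 = l.1 then d i else if i.1 + 1 = l.1 then a i
    else if l.1 + 1 = i.1 then a l else 0

namespace symmTridiag

theorem congr {d a d' a' : ℕ → R} {m : ℕ} (hd : ∀ i < m, d i = d' i)
    (ha : ∀ i, i + 1 < m → a i = a' i) : symmTridiag d a m = symmTridiag d' a' m := by
  ext i l
  simp only [symmTridiag]
  split_ifs with _ hsup hsub
  · exact hd i i.2
  · exact ha i (hsup ▸ l.2)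
  · exact ha l (hsub ▸ i.2)
  · rfl

variable (d a : ℕ → R)

theorem submatrix_castSucc (n : ℕ) :
    (symmTridiag d a (n + 1)).submatrix Fin.castSucc Fin.castSucc = symmTridiag d a n := by
  ext i l
  simp [symmTridiag]

theorem det_rev (m : ℕ) :
    (symmTridiag d a m).det =
      (symmTridiag (fun i => d (m - 1 - i)) (fun i => a (m - 2 - i)) m).det := by
  rw [← det_submatrix_equiv_self Fin.revPerm]
  congr 1
  ext i l
  simp only [submatrix_apply, Fin.revPerm_apply, symmTridiag, Fin.val_rev]
  split_ifs <;> first | rfl | omega | (congr 1; omega)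

theorem det_succ_succ_row_last (n : ℕ) :
    (symmTridiag d a (n + 2)).det =
      d (n + 1) * (symmTridiag d a (n + 1)).det - a n ^ 2 * (symmTridiag d a n).det := by
  rw [det_succ_row _ (Fin.last (n + 1)), Fin.sum_univ_castSucc, Fin.sum_univ_castSucc]
  set A := symmTridiag d a (n + 2)
  set B := A.submatrix Fin.castSucc (Fin.last n).castSucc.succAbove
  have hB : B.det = a n * (symmTridiag d a n).det := by
    rw [det_succ_column B (Fin.last n), Fin.sum_univ_castSucc]
    have hcol : ∀ i : Fin n, B i.castSucc (Fin.last n) = 0 := by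
      intro i
      simp only [B, A, submatrix_apply, symmTridiag, Fin.succAbove_castSucc_self, Fin.succ_last,
        Fin.val_castSucc, Fin.val_last]
      split_ifs <;> first | rfl | omega
    have hminor : B.submatrix Fin.castSucc Fin.castSucc = symmTridiag d a n := by
      ext i l
      simp [B, A, symmTridiag, Fin.succAbove, Fin.lt_def]
    simp only [hcol, Fin.succAbove_last, hminor]
    simp [B, A, symmTridiag]
  have hrow : ∀ j : Fin n, A (Fin.last (n + 1)) j.castSucc.castSucc = 0 := by
    intro j
    simp only [A, symmTridiag, Fin.val_last, Fin.val_castSucc, Nat.add_right_cancel_iff]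
    split_ifs <;> first | rfl | omega
  have hd : A (Fin.last (n + 1)) (Fin.last (n + 1)) = d (n + 1) := by simp [A, symmTridiag]
  have ha : A (Fin.last (n + 1)) (Fin.last n).castSucc = a n := by simp [A, symmTridiag]; omega
  have hlead : A.submatrix Fin.castSucc Fin.castSucc = symmTridiag d a (n + 1) :=
    submatrix_castSucc d a (n + 1)
  have hodd : (-1 : R) ^ (n + 1 + n) = -1 := Odd.neg_one_pow ⟨n, by ring⟩
  have heven : (-1 : R) ^ (n + 1 + (n + 1)) = 1 := Even.neg_one_pow ⟨n + 1, rfl⟩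
  simp only [hrow, Fin.succAbove_last, mul_zero, zero_mul, Finset.sum_const_zero, zero_add,
    Fin.val_last, Fin.val_castSucc, hd, ha, hodd, heven, hlead]
  rw [show A.submatrix _ _ = B from rfl, hB]
  ring

theorem det_succ_succ_row_zero (n : ℕ) :
    (symmTridiag d a (n + 2)).det =
      d 0 * (symmTridiag (fun i => d (i + 1)) (fun i => a (i + 1)) (n + 1)).det -
        a 0 ^ 2 * (symmTridiag (fun i => d (i + 2)) (fun i => a (i + 2)) n).det := by
  rw [det_rev, det_succ_succ_row_last, det_rev _ _ (n + 1), det_rev _ _ n]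
  congr 3 <;> first
    | (congr 1; omega)
    | exact congr (fun i _ => by congr 1; omega) (fun i _ => by congr 1; omega)

theorem det_succ_succ_of_tail_const (x c : R) (a : ℕ → R) (n : ℕ)
    (ha : ∀ i, 0 < i → i ≤ n → a i = c) :
    (symmTridiag (fun _ => x) a (n + 2)).det =
      x * (symmTridiag (fun _ => x) (fun _ => c) (n + 1)).det -
        a 0 ^ 2 * (symmTridiag (fun _ => x) (fun _ => c) n).det := by
  rw [det_succ_succ_row_zero,
    congr (fun _ _ => rfl) (fun i _ => ha (i + 1) i.succ_pos (by omega)),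
    congr (fun _ _ => rfl) (fun i _ => ha (i + 2) (by omega) (by omega))]

end symmTridiag

end

noncomputable def jacobiOffDiag (p q : ℝ) (n i : ℕ) : ℝ :=
  if i = 0 then Real.sqrt q else if i = n then Real.sqrt p else Real.sqrt (p * q)

theorem smul_one_sub_jacobiM (p q lam : ℝ) (n : ℕ) :
    lam • (1 : Matrix (Fin (n + 2)) (Fin (n + 2)) ℝ) - jacobiM p q n =
      symmTridiag (fun _ => lam) (fun i => -jacobiOffDiag p q n i) (n + 2) := by
  ext i l
  simp only [Matrix.sub_apply, Matrix.smul_apply, one_apply, smul_eq_mul, jacobiM, symmTridiag,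
    jacobiOffDiag, Fin.ext_iff]
  split_ifs <;> first | ring1 | (exfalso; omega)

theorem Edet_eq_det_symmTridiag (p q lam : ℝ) (j : ℕ) :
    Edet p q lam j = (symmTridiag (fun _ => lam) (fun _ => -Real.sqrt (p * q)) j).det := by
  unfold Edet
  congr 1
  ext i l
  simp only [Matrix.sub_apply, Matrix.smul_apply, one_apply, pathAdj, symmTridiag, smul_eq_mul,
    Fin.ext_iff]
  split_ifs <;> first | ring1 | (exfalso; omega)

theorem det_charMatrix_jacobiM_recurrence_general
    (p q : ℝ) (hp0 : 0 < p) (hq0 : 0 < q) (hpq : p + q = 1)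
    (k : ℕ) (hk : 2 ≤ k) (lam : ℝ) :
    (lam • (1 : Matrix (Fin (k + 2)) (Fin (k + 2)) ℝ) - jacobiM p q k).det =
      lam ^ 2 * Edet p q lam k - lam * Edet p q lam (k - 1) + p * q * Edet p q lam (k - 2) := by
  obtain ⟨m, rfl⟩ : ∃ m, k = m + 2 := ⟨k - 2, by omega⟩
  have hbulk : ∀ i, 0 < i → i ≤ m + 1 →
      -jacobiOffDiag p q (m + 2) i = -Real.sqrt (p * q) := by
    intro i hi0 hi
    simp only [jacobiOffDiag, if_neg hi0.ne', if_neg (show i ≠ m + 2 by omega)]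
  rw [smul_one_sub_jacobiM, symmTridiag.det_succ_succ_row_last,
    symmTridiag.det_succ_succ_of_tail_const _ _ _ (m + 1) hbulk,
    symmTridiag.det_succ_succ_of_tail_const _ _ _ m (fun i hi0 hi => hbulk i hi0 (by omega))]
  have hhead : (-jacobiOffDiag p q (m + 2) 0) ^ 2 = q := by
    simp [jacobiOffDiag, Real.sq_sqrt hq0.le]
  have htail : (-jacobiOffDiag p q (m + 2) (m + 2)) ^ 2 = p := by
    simp [jacobiOffDiag, Real.sq_sqrt hp0.le]
  simp only [← Edet_eq_det_symmTridiag, hhead, htail, Nat.add_sub_cancel,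
    show m + 2 - 1 = m + 1 by omega]
  linear_combination (-(lam * Edet p q lam (m + 1))) * hpq

/-- **Lemma (recurrence for the characteristic determinant).** For every `k ≥ 2` and
every real `λ`, `det(λ·I_{k+2} - J_{k+2}) = λ²·E_k(λ) - λ·E_{k-1}(λ) + pq·E_{k-2}(λ)`. -/
theorem det_charMatrix_jacobiM_recurrence
    (p q : ℝ) (hp0 : 0 < p) (hp1 : p < 1) (hq0 : 0 < q) (hq1 : q < 1) (hpq : p + q = 1)
    (k : ℕ) (hk : 2 ≤ k) (lam : ℝ) :
    (lam • (1 : Matrix (Fin (k + 2)) (Fin (k + 2)) ℝ) - jacobiM p q k).det =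
      lam ^ 2 * Edet p q lam k - lam * Edet p q lam (k - 1) + p * q * Edet p q lam (k - 2) :=
  det_charMatrix_jacobiM_recurrence_general p q hp0 hq0 hpq k hk lam
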